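/- Let F = F_1·F_2·⋯·F_m be a product with F_s ∈ {L_s^+, L_s^-, M_s^+, M_s^-} for each 1 ≤ s ≤ m. Then for all 1 ≤ a, b ≤ m with a ≠ b, one has V_{a,b}·F = (-1)^{1+‖F_a‖+‖F_b‖}·F. -/

import Mathlib

noncomputable section

/-- The bilinear map `B((a,b),(c,d)) = ∑ⱼ aⱼ dⱼ` on `ℂ^m × ℂ^m`. -/
def splitBilin (m : ℕ) :
    ((Fin m → ℂ) × (Fin m → ℂ)) →ₗ[ℂ] ((Fin m → ℂ) × (Fin m → ℂ)) →ₗ[ℂ] ℂ :=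
  LinearMap.mk₂ ℂ (fun v w => ∑ j, v.1 j * w.2 j)
    (fun v v' w => by simp [add_mul, Finset.sum_add_distrib])
    (fun c v w => by
      simp only [LinearMap.smul_apply, Prod.smul_fst, Pi.smul_apply, smul_eq_mul,
        Finset.mul_sum]
      exact Finset.sum_congr rfl fun i _ => by ring)
    (fun v w w' => by simp [mul_add, Finset.sum_add_distrib])
    (fun c v w => by
      simp only [Prod.smul_snd, Pi.smul_apply, smul_eq_mul, Finset.mul_sum]
      exact Finset.sum_congr rfl fun i _ => by ring)

/-- The quadratic form `Q(a, b) = ∑ⱼ aⱼ bⱼ` on `ℂ^m × ℂ^m` (the span of the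
`f_j^+` and the `f_j^-`). -/
def splitQ (m : ℕ) : QuadraticForm ℂ ((Fin m → ℂ) × (Fin m → ℂ)) :=
  LinearMap.BilinMap.toQuadraticMap (splitBilin m)

/-- The forward basis element `e_j^+` (1-based index `j`). -/
def eP (m : ℕ) (j : ℕ) : CliffordAlgebra (splitQ m) :=
  CliffordAlgebra.ι (splitQ m) ((fun i => if (i : ℕ) + 1 = j then 1 else 0), 0)

/-- The backward basis element `e_j^-` (1-based index `j`). -/
def eM (m : ℕ) (j : ℕ) : CliffordAlgebra (splitQ m) :=
  CliffordAlgebra.ι (splitQ m) (0, (fun i => if (i : ℕ) + 1 = j then 1 else 0))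

/-- `e_j = e_j^+ + e_j^-`. -/
def ee (m : ℕ) (j : ℕ) : CliffordAlgebra (splitQ m) := eP m j + eM m j

/-- `e_j^⊥ = e_j^+ - e_j^-`. -/
def eperp (m : ℕ) (j : ℕ) : CliffordAlgebra (splitQ m) := eP m j - eM m j

/-- The constant `i` for odd (1-based) indices and `1` for even indices. -/
def oddI (s : ℕ) : ℂ := if s % 2 = 1 then Complex.I else 1

/-- `L_s^+`, i.e. `e_s^+ e_s^- + i e_s^+` for odd `s` and `e_s^+ e_s^- + e_s^+` for even `s`. -/
def idemLp (m : ℕ) (s : ℕ) : CliffordAlgebra (splitQ m) := eP m s * eM m s + oddI s • eP m s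

/-- `L_s^-`. -/
def idemLm (m : ℕ) (s : ℕ) : CliffordAlgebra (splitQ m) := eP m s * eM m s - oddI s • eP m s

/-- `M_s^+`, i.e. `e_s^- e_s^+ + i e_s^-` for odd `s` and `e_s^- e_s^+ + e_s^-` for even `s`. -/
def idemMp (m : ℕ) (s : ℕ) : CliffordAlgebra (splitQ m) := eM m s * eP m s + oddI s • eM m s

/-- `M_s^-`. -/
def idemMm (m : ℕ) (s : ℕ) : CliffordAlgebra (splitQ m) := eM m s * eP m s - oddI s • eM m s

/-- A generic choice `F_s ∈ {L_s^+, L_s^-, M_s^+, M_s^-}`, encoded by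
`‖F_s‖ : Bool` (`true` for the `M`'s) and `|F_s| : Bool`
(`true` for `L_s^-` and `M_s^+`). -/
def idemF (m : ℕ) (s : ℕ) : Bool → Bool → CliffordAlgebra (splitQ m)
  | false, false => idemLp m s
  | false, true => idemLm m s
  | true, false => idemMm m s
  | true, true => idemMp m s

/-- Numerical value of `|F_s|` or `‖F_s‖`. -/
def bval (b : Bool) : ℕ := if b then 1 else 0

/-- The four-vector `V_{a,b} = -e_a^⊥ e_a e_b^⊥ e_b`. -/
def VV (m : ℕ) (a b : ℕ) : CliffordAlgebra (splitQ m) :=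
  -(eperp m a * ee m a * eperp m b * ee m b)

/-- The ordered product `F = F_1 F_2 ⋯ F_m`, the factor `F_s` being encoded by
`(nrm s, sg s) = (‖F_s‖, |F_s|)`. -/
def prodF (m : ℕ) (nrm sg : ℕ → Bool) : CliffordAlgebra (splitQ m) :=
  ((List.range m).map fun s => idemF m (s + 1) (nrm (s + 1)) (sg (s + 1))).prod

/-! Write `V_{a,b} = -D_a D_b` with `D_j = e_j^⊥ e_j`, which equals the commutator
`e_j^+ e_j^- - e_j^- e_j^+`. As a product of two vectors anticommuting with `e_s^±` for `s ≠ j`,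
`D_j` commutes with every `F_s`, `s ≠ j`. On `F_j` it acts from the left by `+1` if `F_j` is an
`L` and by `-1` if it is an `M`, because `e^+ e^- e^+ = e^+` and `e^- e^+ e^+ = 0`.
Hence `D_j F = (-1)^{‖F_j‖} F`, and applying this for `j = b` and `j = a` gives the sign. -/

lemma splitQ_apply {m : ℕ} (v : (Fin m → ℂ) × (Fin m → ℂ)) :
    splitQ m v = ∑ i, v.1 i * v.2 i :=
  rfl

lemma polar_splitQ {m : ℕ} (v w : (Fin m → ℂ) × (Fin m → ℂ)) :
    QuadraticMap.polar (splitQ m) v w = ∑ i, (v.1 i * w.2 i + w.1 i * v.2 i) := by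
  rw [splitQ, LinearMap.BilinMap.polar_toQuadraticMap, Finset.sum_add_distrib]
  rfl

lemma eP_mul_self (m j : ℕ) : eP m j * eP m j = 0 := by
  rw [eP, CliffordAlgebra.ι_sq_scalar, splitQ_apply]
  simp

lemma eM_mul_self (m j : ℕ) : eM m j * eM m j = 0 := by
  rw [eM, CliffordAlgebra.ι_sq_scalar, splitQ_apply]
  simp

lemma eP_mul_eP_anticomm (m j l : ℕ) : eP m j * eP m l = -(eP m l * eP m j) := by
  rw [eq_neg_iff_add_eq_zero, eP, eP, CliffordAlgebra.ι_mul_ι_add_swap, polar_splitQ]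
  simp

lemma eM_mul_eM_anticomm (m j l : ℕ) : eM m j * eM m l = -(eM m l * eM m j) := by
  rw [eq_neg_iff_add_eq_zero, eM, eM, CliffordAlgebra.ι_mul_ι_add_swap, polar_splitQ]
  simp

lemma eP_mul_eM_anticomm (m : ℕ) {j l : ℕ} (h : j ≠ l) :
    eP m j * eM m l = -(eM m l * eP m j) := by
  rw [eq_neg_iff_add_eq_zero, eP, eM, CliffordAlgebra.ι_mul_ι_add_swap, polar_splitQ,
    Finset.sum_eq_zero, map_zero]
  intro i _
  simp only [Pi.zero_apply, mul_zero, add_zero, mul_ite, mul_one]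
  grind

lemma eP_mul_eM_add_eM_mul_eP {m j : ℕ} (h1 : 1 ≤ j) (hm : j ≤ m) :
    eP m j * eM m j + eM m j * eP m j = 1 := by
  rw [eP, eM, CliffordAlgebra.ι_mul_ι_add_swap, polar_splitQ,
    Finset.sum_eq_single (⟨j - 1, by omega⟩ : Fin m)]
  · simp [Nat.sub_add_cancel h1]
  · intro i _ hi
    have : (i : ℕ) + 1 ≠ j := fun h => hi (Fin.ext (by simp; omega))
    simp [this]
  · simp

lemma eM_mul_eP_anticomm (m : ℕ) {j l : ℕ} (h : j ≠ l) :
    eM m j * eP m l = -(eP m l * eM m j) := by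
  rw [eP_mul_eM_anticomm m h.symm, neg_neg]

section Anticommuting

variable {A : Type*} [Ring A] {P M X : A}

lemma commute_mul_of_anticomm (hP : P * X = -(X * P)) (hM : M * X = -(X * M)) :
    Commute (P * M) X := by
  rw [Commute, SemiconjBy, mul_assoc, hM, mul_neg, ← mul_assoc, hP, neg_mul, neg_neg,
    mul_assoc]

lemma sub_mul_add_of_mul_self_eq_zero (hP : P * P = 0) (hM : M * M = 0) :
    (P - M) * (P + M) = P * M - M * P := by
  rw [sub_mul, mul_add, mul_add, hP, hM]
  abel

lemma commutator_mul_mul_add_smul {R : Type*} [CommRing R] [Algebra R A]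
    (hP : P * P = 0) (h : P * M + M * P = 1) (c : R) :
    (P * M - M * P) * (P * M + c • P) = P * M + c • P := by
  have hMP : M * P = 1 - P * M := eq_sub_of_add_eq' h
  have hPMP : P * M * P = P := by
    rw [mul_assoc, hMP, mul_sub, mul_one, ← mul_assoc, hP, zero_mul, sub_zero]
  have hPMPM : P * M * (P * M) = P * M := by rw [← mul_assoc, hPMP]
  have hMPP : M * P * P = 0 := by rw [mul_assoc, hP, mul_zero]
  rw [sub_mul, mul_add, mul_add, mul_smul_comm, mul_smul_comm, hPMPM, hPMP, ← mul_assoc,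
    hMPP, zero_mul, smul_zero]
  abel

end Anticommuting

lemma eperp_mul_ee (m j : ℕ) : eperp m j * ee m j = eP m j * eM m j - eM m j * eP m j :=
  sub_mul_add_of_mul_self_eq_zero (eP_mul_self m j) (eM_mul_self m j)

lemma commute_eperp_mul_ee_eP (m : ℕ) {j s : ℕ} (h : s ≠ j) :
    Commute (eperp m j * ee m j) (eP m s) := by
  rw [eperp_mul_ee]
  have hP := eP_mul_eP_anticomm m j s
  have hM := eM_mul_eP_anticomm m h.symm
  exact (commute_mul_of_anticomm hP hM).sub_left (commute_mul_of_anticomm hM hP)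

lemma commute_eperp_mul_ee_eM (m : ℕ) {j s : ℕ} (h : s ≠ j) :
    Commute (eperp m j * ee m j) (eM m s) := by
  rw [eperp_mul_ee]
  have hP := eP_mul_eM_anticomm m h.symm
  have hM := eM_mul_eM_anticomm m j s
  exact (commute_mul_of_anticomm hP hM).sub_left (commute_mul_of_anticomm hM hP)

lemma commute_eperp_mul_ee_idemF (m : ℕ) {j s : ℕ} (h : s ≠ j) (n g : Bool) :
    Commute (eperp m j * ee m j) (idemF m s n g) := by
  have hP := commute_eperp_mul_ee_eP m h
  have hM := commute_eperp_mul_ee_eM m h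
  cases n <;> cases g
  · exact (hP.mul_right hM).add_right (hP.smul_right _)
  · exact (hP.mul_right hM).sub_right (hP.smul_right _)
  · exact (hM.mul_right hP).sub_right (hM.smul_right _)
  · exact (hM.mul_right hP).add_right (hM.smul_right _)

lemma eperp_mul_ee_mul_idemF {m s : ℕ} (h1 : 1 ≤ s) (hs : s ≤ m) (n g : Bool) :
    eperp m s * ee m s * idemF m s n g = ((-1 : ℂ) ^ bval n) • idemF m s n g := by
  have hPM := eP_mul_eM_add_eM_mul_eP h1 hs
  have hL (c : ℂ) := commutator_mul_mul_add_smul (eP_mul_self m s) hPM c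
  have hM (c : ℂ) : (eP m s * eM m s - eM m s * eP m s) * (eM m s * eP m s + c • eM m s) =
      -(eM m s * eP m s + c • eM m s) := by
    rw [← neg_sub, neg_mul,
      commutator_mul_mul_add_smul (eM_mul_self m s) ((add_comm _ _).trans hPM) c]
  rw [eperp_mul_ee]
  -- `sub_eq_add_neg` is instantiated so as to rewrite `L_s^-, M_s^-` but not the commutator
  cases n <;> cases g <;>
    simp only [idemF, idemLp, idemLm, idemMp, idemMm, bval, sub_eq_add_neg (_ * _) (_ • _),
      ← neg_smul, hL, hM, Bool.false_eq_true, if_false, if_true, pow_zero, pow_one, one_smul,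
      neg_one_smul]

lemma mul_prod_map_eq_smul_of_mem {ι R A : Type*} [Monoid A] [SMul R A] [IsScalarTower R A A]
    [SMulCommClass R A A] {x : A} {c : R} {f : ι → A} {i : ι} {l : List ι} (hi : i ∈ l)
    (hcomm : ∀ j ≠ i, Commute x (f j)) (hx : x * f i = c • f i) :
    x * (l.map f).prod = c • (l.map f).prod := by
  induction l with
  | nil => simp at hi
  | cons j l ih =>
    rw [List.map_cons, List.prod_cons, ← mul_assoc]
    by_cases hj : j = i
    · rw [hj, hx, smul_mul_assoc]
    · rw [(hcomm j hj).eq, mul_assoc, ih (List.mem_of_ne_of_mem (Ne.symm hj) hi),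
        mul_smul_comm]

lemma eperp_mul_ee_mul_prodF {m j : ℕ} (h1 : 1 ≤ j) (hj : j ≤ m) (nrm sg : ℕ → Bool) :
    eperp m j * ee m j * prodF m nrm sg = ((-1 : ℂ) ^ bval (nrm j)) • prodF m nrm sg := by
  refine mul_prod_map_eq_smul_of_mem (i := j - 1) (List.mem_range.2 (by omega))
    (fun s hs => commute_eperp_mul_ee_idemF m (by omega) _ _) ?_
  rw [Nat.sub_add_cancel h1]
  exact eperp_mul_ee_mul_idemF h1 hj _ _

theorem V_mul_prodF_general (m : ℕ) (nrm sg : ℕ → Bool) (a b : ℕ)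
    (ha1 : 1 ≤ a) (ham : a ≤ m) (hb1 : 1 ≤ b) (hbm : b ≤ m) :
    VV m a b * prodF m nrm sg =
      ((-1 : ℂ) ^ (1 + bval (nrm a) + bval (nrm b))) • prodF m nrm sg := by
  have hV : VV m a b = -(eperp m a * ee m a * (eperp m b * ee m b)) := by
    rw [VV, ← mul_assoc]
  rw [hV, neg_mul, mul_assoc, eperp_mul_ee_mul_prodF hb1 hbm, mul_smul_comm,
    eperp_mul_ee_mul_prodF ha1 ham, smul_smul, ← neg_smul]
  congr 1
  ring

/-- for `F = F_1 F_2 ⋯ F_m` and `a ≠ b`,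
`V_{a,b} F = (-1)^{1+‖F_a‖+‖F_b‖} F`. -/
theorem V_mul_prodF (m : ℕ) (hm : 1 ≤ m) (nrm sg : ℕ → Bool) (a b : ℕ)
    (ha1 : 1 ≤ a) (ham : a ≤ m) (hb1 : 1 ≤ b) (hbm : b ≤ m) (hab : a ≠ b) :
    VV m a b * prodF m nrm sg =
      ((-1 : ℂ) ^ (1 + bval (nrm a) + bval (nrm b))) • prodF m nrm sg :=
  V_mul_prodF_general m nrm sg a b ha1 ham hb1 hbm
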